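/- Let m ≥ 1 be an integer and q_m¹(μ) = 11 + 6(m−1)μ + ((3m²−9m−2)/4)μ², so that q_m¹(μ) = (1/((m+1)μ)) · (dP_μ^m/dη)(1/2). For m ≥ 4, q_m¹(μ) > 0 for all μ > 0. For 1 ≤ m ≤ 3, q_m¹ has exactly one positive root μ_m¹, q_m¹ is positive on [0, μ_m¹), and μ_m < μ_m¹, where μ_m is the unique positive root of q_m(μ) = P_μ^m(1/2). Moreover μ₁¹ = √(11/2), μ₂¹ = (3+√31)/2, μ₃¹ = 12+√166. -/

import Mathlib

/-!
The identity for `q_m¹` is a direct differentiation, and for `m ≥ 4` every coefficient of `q_m¹`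
is positive. For `m ≤ 3` the leading coefficient is `-a` with `a = (2 + 3m(3 - m))/4 > 0`, while
`q_m¹(0) = 11 > 0`; substituting the root relation for the linear coefficient factors `q_m¹` as
`(r - μ)(aμ + 11/r)` through any positive root `r`. So `q_m¹` is positive on `[0, ∞)` exactly
below `r`, which gives uniqueness of `r` and reduces `μ_m < r` to `q_m¹(μ_m) > 0`, a polynomial
inequality checked case by case.
-/

/-- The representative polynomial `P_μ^m` of type `I_{1,3}` (real variable). -/
noncomputable def PI13 (m : ℕ) (μ η : ℝ) : ℝ :=
  (1 - μ) * (2 - μ) * (3 - μ) + ((m : ℝ) + 1) * μ * (1 - μ) * (11 - 7 * μ) * η +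
    6 * ((m : ℝ) + 1) * ((m : ℝ) + 2) * (1 - μ) * μ ^ 2 * η ^ 2 +
    ((m : ℝ) + 1) * ((m : ℝ) + 2) * ((m : ℝ) + 3) * μ ^ 3 * η ^ 3

/-- `q_m(μ) = P_μ^m(1/2)` for type `I_{1,3}`. -/
noncomputable def qI13 (m : ℕ) (μ : ℝ) : ℝ := PI13 m μ (1 / 2)

/-- `q_m¹(μ) = 11 + 6(m-1)μ + ((3m²-9m-2)/4)μ²` for type `I_{1,3}`. -/
noncomputable def qI13' (m : ℕ) (μ : ℝ) : ℝ :=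
  11 + 6 * ((m : ℝ) - 1) * μ + ((3 * (m : ℝ) ^ 2 - 9 * (m : ℝ) - 2) / 4) * μ ^ 2

section Quadratic

variable {a b c r μ : ℝ}

theorem quadratic_pos_iff_lt_root (ha : 0 ≤ a) (hc : 0 < c) (hr : 0 < r)
    (hroot : c + b * r - a * r ^ 2 = 0) (hμ : 0 ≤ μ) :
    0 < c + b * μ - a * μ ^ 2 ↔ μ < r := by
  have hfactor : c + b * μ - a * μ ^ 2 = (r - μ) * (a * μ + c / r) := by
    have hb : b = a * r - c / r := by field_simp; linarith
    subst hb
    field_simp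
    ring
  have hpos : 0 < a * μ + c / r := by positivity
  rw [hfactor, mul_pos_iff_of_pos_right hpos, sub_pos]

theorem quadratic_pos_root_unique (ha : 0 ≤ a) (hc : 0 < c) {s : ℝ} (hr : 0 < r) (hs : 0 < s)
    (hroot_r : c + b * r - a * r ^ 2 = 0) (hroot_s : c + b * s - a * s ^ 2 = 0) : r = s := by
  have hrs := quadratic_pos_iff_lt_root ha hc hs hroot_s hr.le
  have hsr := quadratic_pos_iff_lt_root ha hc hr hroot_r hs.le
  rw [hroot_r, lt_self_iff_false, false_iff, not_lt] at hrs
  rw [hroot_s, lt_self_iff_false, false_iff, not_lt] at hsr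
  exact le_antisymm hsr hrs

end Quadratic

theorem hasDerivAt_PI13 (m : ℕ) (μ x : ℝ) :
    HasDerivAt (PI13 m μ)
      (((m : ℝ) + 1) * μ * (1 - μ) * (11 - 7 * μ) +
        6 * ((m : ℝ) + 1) * ((m : ℝ) + 2) * (1 - μ) * μ ^ 2 * (2 * x) +
        ((m : ℝ) + 1) * ((m : ℝ) + 2) * ((m : ℝ) + 3) * μ ^ 3 * (3 * x ^ 2)) x := by
  have h : HasDerivAt (PI13 m μ) _ x := (((hasDerivAt_const x ((1 - μ) * (2 - μ) * (3 - μ))).add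
      ((hasDerivAt_id' x).const_mul (((m : ℝ) + 1) * μ * (1 - μ) * (11 - 7 * μ)))).add
      ((hasDerivAt_pow 2 x).const_mul (6 * ((m : ℝ) + 1) * ((m : ℝ) + 2) * (1 - μ) * μ ^ 2))).add
      ((hasDerivAt_pow 3 x).const_mul (((m : ℝ) + 1) * ((m : ℝ) + 2) * ((m : ℝ) + 3) * μ ^ 3))
  exact h.congr_deriv (by push_cast; ring)

theorem deriv_PI13_one_half (m : ℕ) (μ : ℝ) :
    deriv (PI13 m μ) (1 / 2) = ((m : ℝ) + 1) * μ * qI13' m μ := by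
  rw [(hasDerivAt_PI13 m μ _).deriv, qI13']
  ring

theorem qI13'_pos_of_four_le {m : ℕ} (hm : 4 ≤ m) {μ : ℝ} (hμ : 0 < μ) : 0 < qI13' m μ := by
  have hm' : (4 : ℝ) ≤ m := by exact_mod_cast hm
  have hb : 0 ≤ 6 * ((m : ℝ) - 1) := by linarith
  have ha : 0 ≤ (3 * (m : ℝ) ^ 2 - 9 * (m : ℝ) - 2) / 4 := by nlinarith
  unfold qI13'
  positivity

section SmallM

variable {m : ℕ} {r μ : ℝ}

theorem qI13'_eq_quadratic (m : ℕ) (μ : ℝ) :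
    qI13' m μ = 11 + 6 * ((m : ℝ) - 1) * μ - (2 + 9 * (m : ℝ) - 3 * (m : ℝ) ^ 2) / 4 * μ ^ 2 := by
  unfold qI13'
  ring

theorem qI13'_leading_coeff_pos (hm : m ≤ 3) : 0 < (2 + 9 * (m : ℝ) - 3 * (m : ℝ) ^ 2) / 4 := by
  have hm' : (m : ℝ) ≤ 3 := by exact_mod_cast hm
  nlinarith [m.cast_nonneg (α := ℝ)]

theorem qI13'_pos_iff_lt_root (hm : m ≤ 3) (hr : 0 < r) (hroot : qI13' m r = 0) (hμ : 0 ≤ μ) :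
    0 < qI13' m μ ↔ μ < r := by
  rw [qI13'_eq_quadratic] at hroot ⊢
  exact quadratic_pos_iff_lt_root (qI13'_leading_coeff_pos hm).le (by norm_num) hr hroot hμ

theorem qI13'_pos_root_unique (hm : m ≤ 3) {s : ℝ} (hr : 0 < r) (hs : 0 < s)
    (hroot_r : qI13' m r = 0) (hroot_s : qI13' m s = 0) : r = s := by
  rw [qI13'_eq_quadratic] at hroot_r hroot_s
  exact quadratic_pos_root_unique (qI13'_leading_coeff_pos hm).le (by norm_num) hr hs
    hroot_r hroot_s

theorem qI13'_pos_of_qI13_eq_zero (hm1 : 1 ≤ m) (hm3 : m ≤ 3) {s : ℝ} (hs : 0 < s)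
    (hq : qI13 m s = 0) : 0 < qI13' m s := by
  interval_cases m <;>
  · simp only [qI13, PI13, qI13'] at hq ⊢
    push_cast at hq ⊢
    nlinarith [mul_pos hs hs]

end SmallM

theorem qI13'_one_sqrt : qI13' 1 (Real.sqrt (11 / 2)) = 0 := by
  have h : Real.sqrt (11 / 2) ^ 2 = 11 / 2 := Real.sq_sqrt (by norm_num)
  unfold qI13'
  push_cast
  linarith

theorem qI13'_two_sqrt : qI13' 2 ((3 + Real.sqrt 31) / 2) = 0 := by
  have h : Real.sqrt 31 ^ 2 = 31 := Real.sq_sqrt (by norm_num)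
  unfold qI13'
  push_cast
  linear_combination (-1 / 2 : ℝ) * h

theorem qI13'_three_sqrt : qI13' 3 (12 + Real.sqrt 166) = 0 := by
  have h : Real.sqrt 166 ^ 2 = 166 := Real.sq_sqrt (by norm_num)
  unfold qI13'
  push_cast
  linear_combination (-1 / 2 : ℝ) * h

/-- Sign of `(dP_μ^m/dη)(1/2)` for type `I_{1,3}`:
`q_m¹(μ) = (1/((m+1)μ))·(dP_μ^m/dη)(1/2)`; it is positive for all `μ > 0` when
`m ≥ 4`; for `1 ≤ m ≤ 3` it has a unique positive root `μ_m¹`, is positive on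
`[0, μ_m¹)`, and `μ_m < μ_m¹` where `μ_m` is the unique positive root of `q_m`.
Explicitly `μ₁¹ = √(11/2)`, `μ₂¹ = (3+√31)/2`, `μ₃¹ = 12+√166`. -/
theorem qI13'_sign :
    (∀ m : ℕ, 1 ≤ m → ∀ μ : ℝ, 0 < μ →
      qI13' m μ = (1 / (((m : ℝ) + 1) * μ)) * deriv (fun η : ℝ => PI13 m μ η) (1 / 2)) ∧
    (∀ m : ℕ, 4 ≤ m → ∀ μ : ℝ, 0 < μ → 0 < qI13' m μ) ∧
    (∀ m : ℕ, 1 ≤ m → m ≤ 3 → ∃! r : ℝ, 0 < r ∧ qI13' m r = 0) ∧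
    (∀ m : ℕ, 1 ≤ m → m ≤ 3 → ∀ r : ℝ, 0 < r → qI13' m r = 0 →
      (∀ μ : ℝ, 0 ≤ μ → μ < r → 0 < qI13' m μ) ∧
      (∀ s : ℝ, 0 < s → qI13 m s = 0 → s < r)) ∧
    qI13' 1 (Real.sqrt (11 / 2)) = 0 ∧
    qI13' 2 ((3 + Real.sqrt 31) / 2) = 0 ∧
    qI13' 3 (12 + Real.sqrt 166) = 0 := by
  refine ⟨?_, fun m hm μ hμ => qI13'_pos_of_four_le hm hμ, ?_, ?_,
    qI13'_one_sqrt, qI13'_two_sqrt, qI13'_three_sqrt⟩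
  · intro m _ μ hμ
    rw [deriv_PI13_one_half]
    field_simp
  · intro m hm1 hm3
    have hexists : ∃ r : ℝ, 0 < r ∧ qI13' m r = 0 := by
      interval_cases m
      · exact ⟨_, by positivity, qI13'_one_sqrt⟩
      · exact ⟨_, by positivity, qI13'_two_sqrt⟩
      · exact ⟨_, by positivity, qI13'_three_sqrt⟩
    obtain ⟨r, hr, hroot⟩ := hexists
    exact ⟨r, ⟨hr, hroot⟩, fun s ⟨hs, hroot_s⟩ => qI13'_pos_root_unique hm3 hs hr hroot_s hroot⟩
  · intro m hm1 hm3 r hr hroot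
    exact ⟨fun μ hμ hμr => (qI13'_pos_iff_lt_root hm3 hr hroot hμ).2 hμr,
      fun s hs hq => (qI13'_pos_iff_lt_root hm3 hr hroot hs.le).1
        (qI13'_pos_of_qI13_eq_zero hm1 hm3 hs hq)⟩
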